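/- Let G^{Init} be a rooted binary tree and 𝒢 a set of pairwise separated subtrees of G^{Init} covering all leaves. Let x be a node of G^{Init} such that the left child subtree of x contains exactly one tree of 𝒢 (namely G^{Init}[x_l] itself is in 𝒢) and the right child subtree contains at least two trees of 𝒢. Then in any triplet-respecting supertree G^{TR} for 𝒢, letting y be the node with L(y) = L(x) and y* the node with L(y*) = L(x_r) (both exist), the subtree G^{TR}[y] is obtained from G^{Init}[x_l] by grafting G^{TR}[y*] so that its root becomes the sibling of some node x* of G^{Init}[x_l]. -/

import Mathlib

inductive BTree (α : Type) where
  | leaf : α → BTree α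
  | node : BTree α → BTree α → BTree α
deriving DecidableEq

namespace BTree

variable {α : Type} [DecidableEq α] {σ : Type} [DecidableEq σ] {γ : Type} [DecidableEq γ]

/-- leaf (label) set of a tree -/
def leaves : BTree α → Finset α
  | leaf a => {a}
  | node l r => leaves l ∪ leaves r

/-- the leaf labels are pairwise distinct -/
def nodupLeaves : BTree α → Prop
  | leaf _ => True
  | node l r => nodupLeaves l ∧ nodupLeaves r ∧ Disjoint (leaves l) (leaves r)

/-- the (unordered) bipartition `(Ll, Lr)` is compatible with the tree:
the whole leaf set lies in one part, or the leaf sets of the two root child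
subtrees lie in opposite parts. -/
def compatible : BTree α → Finset α → Finset α → Prop
  | leaf a, Ll, Lr => a ∈ Ll ∨ a ∈ Lr
  | node l r, Ll, Lr =>
      leaves l ∪ leaves r ⊆ Ll ∨ leaves l ∪ leaves r ⊆ Lr ∨
      (leaves l ⊆ Ll ∧ leaves r ⊆ Lr) ∨ (leaves l ⊆ Lr ∧ leaves r ⊆ Ll)

/-- union of the leaf sets of a list of trees -/
def unionLeaves (Gs : List (BTree α)) : Finset α :=
  Gs.foldr (fun g acc => leaves g ∪ acc) ∅

/-- `(Ll, Lr)` is a bipartition of the union of the leaf sets (both parts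
nonempty) compatible with every tree in the list. -/
def isCompBip (Gs : List (BTree α)) (Ll Lr : Finset α) : Prop :=
  Ll ∪ Lr = unionLeaves Gs ∧ Disjoint Ll Lr ∧ Ll.Nonempty ∧ Lr.Nonempty ∧
    ∀ G ∈ Gs, compatible G Ll Lr

/-- restriction `G|_L` : remove the leaves not in `L` and suppress the
resulting degree-2 nodes; `none` if no leaf of `G` lies in `L`. -/
def restrict : BTree α → Finset α → Option (BTree α)
  | leaf a, L => if a ∈ L then some (leaf a) else none
  | node l r, L =>
      match restrict l L, restrict r L with
      | some l', some r' => some (node l' r')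
      | some l', none => some l'
      | none, some r' => some r'
      | none, none => none

/-- isomorphism of rooted leaf-labeled trees (children are unordered) -/
inductive Iso : BTree α → BTree α → Prop
  | leaf (a : α) : Iso (leaf a) (leaf a)
  | node {l r l' r' : BTree α} : Iso l l' → Iso r r' → Iso (node l r) (node l' r')
  | swap {l r l' r' : BTree α} : Iso l r' → Iso r l' → Iso (node l r) (node l' r')

/-- `G` displays `G'` : the restriction of `G` to the leaves of `G'` is
isomorphic to `G'` (preserving leaf labels). -/
def displays (G G' : BTree α) : Prop :=
  ∃ t, restrict G (leaves G') = some t ∧ Iso t G'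

/-- `Subtree t T` : `t` is a complete rooted subtree of `T` (i.e. `t = T[x]`
for some node `x` of `T`).  Equivalently, the root of `T` is a (weak)
ancestor of the root of `t`. -/
inductive Subtree : BTree α → BTree α → Prop
  | refl (t : BTree α) : Subtree t t
  | left {t l r : BTree α} : Subtree t l → Subtree t (node l r)
  | right {t l r : BTree α} : Subtree t r → Subtree t (node l r)

/-- two nodes (complete subtrees) are separated: neither is a (weak)
ancestor of the other -/
def separated (u v : BTree α) : Prop := ¬ Subtree u v ∧ ¬ Subtree v u

/-- the subtree rooted at the lowest common ancestor of the leaf set `L` -/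
def lcaSub : BTree α → Finset α → BTree α
  | leaf a, _ => leaf a
  | node l r, L =>
      if L ⊆ leaves l then lcaSub l L
      else if L ⊆ leaves r then lcaSub r L
      else node l r

/-- `T1` and `T2` induce the same rooted triplet topology on `{a, b, c}` -/
def sameTriplet (T1 T2 : BTree α) (a b c : α) : Prop :=
  ∃ t1 t2, restrict T1 {a, b, c} = some t1 ∧ restrict T2 {a, b, c} = some t2 ∧ Iso t1 t2

/-- `GTR` is triplet respecting w.r.t. `GInit` and the family `Gs` : for any
three leaves taken from three distinct trees of `Gs`, `GInit` and `GTR`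
induce the same rooted triplet topology. -/
def tripletRespecting (GInit GTR : BTree α) (Gs : List (BTree α)) : Prop :=
  ∀ G1 ∈ Gs, ∀ G2 ∈ Gs, ∀ G3 ∈ Gs, G1 ≠ G2 → G1 ≠ G3 → G2 ≠ G3 →
    ∀ a ∈ leaves G1, ∀ b ∈ leaves G2, ∀ c ∈ leaves G3, sameTriplet GInit GTR a b c

/-- at least two (distinct) trees of `Gs` are subtrees of `t` : `|𝒢(t)| ≥ 2` -/
def atLeastTwo (Gs : List (BTree α)) (t : BTree α) : Prop :=
  ∃ Gi ∈ Gs, ∃ Gj ∈ Gs, Gi ≠ Gj ∧ Subtree Gi t ∧ Subtree Gj t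

/-- `Graft T' T R` : `R` is obtained from `T` by grafting `T'` at some node
`x*` of `T`, i.e. subdividing the edge above `x*` (or adding a new root if
`x*` is the root) and attaching `T'` as the new sibling of `x*`. -/
inductive Graft (T' : BTree α) : BTree α → BTree α → Prop
  | atRootL (T : BTree α) : Graft T' T (node T' T)
  | atRootR (T : BTree α) : Graft T' T (node T T')
  | left {l r g : BTree α} : Graft T' l g → Graft T' (node l r) (node g r)
  | right {l r g : BTree α} : Graft T' r g → Graft T' (node l r) (node l g)

/-- number of edges from the root of `u` down to the node `v`, if `v` is a
node (complete subtree) of `u` -/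
def edist : BTree σ → BTree σ → Option ℕ
  | leaf a, v => if leaf a = v then some 0 else none
  | node l r, v =>
      if node l r = v then some 0 else
      match edist l v, edist r v with
      | some n, _ => some (n + 1)
      | none, some n => some (n + 1)
      | none, none => none

/-- number of nodes strictly between an ancestor `u` and a descendant `v` -/
def inter (u v : BTree σ) : ℕ := (edist u v).getD 1 - 1

/-- node (`lca`) of the species tree `S` associated to a set `L` of genes -/
def specOf (S : BTree σ) (s : γ → σ) (L : Finset γ) : BTree σ := lcaSub S (L.image s)

/-- the species-tree node `s(x)` associated with a gene-tree node `x`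
(lca of the species of the leaves below `x`) -/
def spec (S : BTree σ) (s : γ → σ) (t : BTree γ) : BTree σ := specOf S s (leaves t)

/-- the local LCA-reconciliation cost of a node whose own mapping is `su`
and whose children map to `sl` and `sr` -/
def localCost (su sl sr : BTree σ) : ℕ :=
  inter su sl + inter su sr +
    (if su = sl ∧ su = sr then 1 else if su = sl ∨ su = sr then 2 else 0)

/-- number of duplication nodes of the LCA-reconciliation -/
def dupCount (S : BTree σ) (s : γ → σ) : BTree γ → ℕ
  | leaf _ => 0
  | node l r =>
      dupCount S s l + dupCount S s r +
      (if spec S s (node l r) = spec S s l ∨ spec S s (node l r) = spec S s r then 1 else 0)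

/-- minimum number of losses of the LCA-reconciliation: for each edge `(x,c)`,
`inter(s(x), s(c))` losses, plus one more loss for each child `c` of a
duplication node `x` with `s(c) ≠ s(x)` -/
def lossCount (S : BTree σ) (s : γ → σ) : BTree γ → ℕ
  | leaf _ => 0
  | node l r =>
      lossCount S s l + lossCount S s r +
      (if spec S s (node l r) = spec S s l ∨ spec S s (node l r) = spec S s r then
        (inter (spec S s (node l r)) (spec S s l) +
          if spec S s l = spec S s (node l r) then 0 else 1) +
        (inter (spec S s (node l r)) (spec S s r) +
          if spec S s r = spec S s (node l r) then 0 else 1)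
      else
        inter (spec S s (node l r)) (spec S s l) + inter (spec S s (node l r)) (spec S s r))

/-- sum over all internal nodes of the local LCA-reconciliation costs -/
def totalLocal (S : BTree σ) (s : γ → σ) : BTree γ → ℕ
  | leaf _ => 0
  | node l r =>
      totalLocal S s l + totalLocal S s r +
      localCost (spec S s (node l r)) (spec S s l) (spec S s r)

/-- `G` is a supertree for `Gs` : a tree on the union of the leaf sets
(each leaf once) displaying every tree of `Gs` -/
def isSupertree (Gs : List (BTree γ)) (G : BTree γ) : Prop :=
  leaves G = unionLeaves Gs ∧ nodupLeaves G ∧ ∀ Gi ∈ Gs, displays G Gi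

/-- `MinSGT` : minimum LCA-reconciliation cost over all supertrees -/
noncomputable def reconMin (S : BTree σ) (s : γ → σ) (Gs : List (BTree γ)) : ℕ :=
  sInf {c | ∃ G : BTree γ, isSupertree Gs G ∧ totalLocal S s G = c}

/-- restrictions `G_i|_L` of the trees of the list (dropping empty ones) -/
def restrictList (Gs : List (BTree γ)) (L : Finset γ) : List (BTree γ) :=
  Gs.filterMap fun G => restrict G L

/-- the four possible ordered choices for distributing a tree into the two
parts of a bipartition: whole tree left, whole tree right, left subtree
left & right subtree right, left subtree right & right subtree left -/
def pick : BTree α → ℕ → Finset α × Finset α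
  | G, 0 => (leaves G, ∅)
  | G, 1 => (∅, leaves G)
  | node l r, 2 => (leaves l, leaves r)
  | node l r, _ => (leaves r, leaves l)
  | G, _ => (∅, leaves G)

/-- left part produced by a distribution `f` of choices -/
def partsLeft (Gs : List (BTree α)) (f : Fin Gs.length → Fin 4) : Finset α :=
  Finset.univ.biUnion fun i => (pick (Gs.get i) (f i).val).1

/-- right part produced by a distribution `f` of choices -/
def partsRight (Gs : List (BTree α)) (f : Fin Gs.length → Fin 4) : Finset α :=
  Finset.univ.biUnion fun i => (pick (Gs.get i) (f i).val).2

/-- the complete subtree at a position (path from the root) -/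
def subtreeAt : BTree α → List Bool → Option (BTree α)
  | t, [] => some t
  | leaf _, _ :: _ => none
  | node l _, false :: p => subtreeAt l p
  | node _ r, true :: p => subtreeAt r p

/-- the set of positions of internal nodes -/
def internalPos : BTree α → Finset (List Bool)
  | leaf _ => ∅
  | node l r =>
      insert [] ((internalPos l).image (List.cons false) ∪
        (internalPos r).image (List.cons true))

end BTree

/-- labeled gene trees: each internal node carries `true` (Dup) or `false` (Spec) -/
inductive LTree (α : Type) where
  | leaf : α → LTree α
  | node : Bool → LTree α → LTree α → LTree α
deriving DecidableEq

namespace LTree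

variable {α : Type} [DecidableEq α]

def leaves : LTree α → Finset α
  | leaf a => {a}
  | node _ l r => leaves l ∪ leaves r

/-- underlying unlabeled tree -/
def shape : LTree α → BTree α
  | leaf a => BTree.leaf a
  | node _ l r => BTree.node (shape l) (shape r)

/-- the event label of the root (`none` for a leaf) -/
def rootEv : LTree α → Option Bool
  | leaf _ => none
  | node e _ _ => some e

inductive Subtree : LTree α → LTree α → Prop
  | refl (t : LTree α) : Subtree t t
  | left {t l r : LTree α} {e : Bool} : Subtree t l → Subtree t (node e l r)
  | right {t l r : LTree α} {e : Bool} : Subtree t r → Subtree t (node e l r)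

/-- the subtree rooted at the lowest common ancestor of the leaf set `L` -/
def lcaSub : LTree α → Finset α → LTree α
  | leaf a, _ => leaf a
  | node e l r, L =>
      if L ⊆ leaves l then lcaSub l L
      else if L ⊆ leaves r then lcaSub r L
      else node e l r

/-- `G` displays `G'` (topologically, ignoring labels) -/
def displaysL (G G' : LTree α) : Prop := BTree.displays (shape G) (shape G')

/-- `(G, ev_G)` is label-compatible with `(G', ev_{G'})` : every internal
node `x'` of `G'` has the same event label as `lca_G(L(x'))` -/
def labelCompatible (G G' : LTree α) : Prop :=
  ∀ (e : Bool) (l r : LTree α), Subtree (node e l r) G' →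
    rootEv (lcaSub G (leaves (node e l r))) = some e

end LTree

/-! In `G^{TR}`, the leaves of a node `w` of `G^{Init}` containing two trees of `𝒢` form a
cluster: if a node of `G^{TR}` contained a leaf of `w` and a leaf `c` outside `w` but missed
another leaf of `w`, then two leaves of `w` from distinct trees of `𝒢` (one inside that node,
one outside) together with `c` would form a triplet resolved differently in `G^{Init}` and in
`G^{TR}`. Applied to `x` and `x_r` this yields the nodes `y` and `y*`, with `y*` strictly below
`y`. Restricting `G^{TR}[y]` to `L(x_l)` removes exactly `G^{TR}[y*]`, and since `G^{TR}`
displays `G^{Init}[x_l] ∈ 𝒢` this restriction is isomorphic to `G^{Init}[x_l]`; so `G^{TR}[y]`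
is `G^{Init}[x_l]` with `G^{TR}[y*]` grafted back in. -/

namespace BTree

section

variable {α : Type}

theorem Iso.refl : ∀ t : BTree α, Iso t t
  | .leaf a => .leaf a
  | .node l r => .node (Iso.refl l) (Iso.refl r)

theorem Iso.symm : ∀ {s t : BTree α}, Iso s t → Iso t s
  | _, _, .leaf a => .leaf a
  | _, _, .node h₁ h₂ => .node h₁.symm h₂.symm
  | _, _, .swap h₁ h₂ => .swap h₂.symm h₁.symm

theorem Subtree.trans {u v T : BTree α} (h₁ : Subtree u v) (h₂ : Subtree v T) : Subtree u T := by
  induction h₂ with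
  | refl => exact h₁
  | left _ ih => exact .left ih
  | right _ ih => exact .right ih

theorem Graft.exists_of_iso {v t y x : BTree α} (hg : Graft v t y) (hiso : Iso t x) :
    ∃ g, Graft v x g ∧ Iso g y := by
  induction hg generalizing x with
  | atRootL => exact ⟨node v x, .atRootL x, .node (Iso.refl v) hiso.symm⟩
  | atRootR => exact ⟨node x v, .atRootR x, .node hiso.symm (Iso.refl v)⟩
  | left _ ih =>
    cases hiso with
    | node h₁ h₂ =>
      obtain ⟨g, hg, hgiso⟩ := ih h₁
      exact ⟨node g _, .left hg, .node hgiso h₂.symm⟩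
    | swap h₁ h₂ =>
      obtain ⟨g, hg, hgiso⟩ := ih h₁
      exact ⟨node _ g, .right hg, .swap h₂.symm hgiso⟩
  | right _ ih =>
    cases hiso with
    | node h₁ h₂ =>
      obtain ⟨g, hg, hgiso⟩ := ih h₂
      exact ⟨node _ g, .right hg, .node h₁.symm hgiso⟩
    | swap h₁ h₂ =>
      obtain ⟨g, hg, hgiso⟩ := ih h₂
      exact ⟨node g _, .left hg, .swap hgiso h₁.symm⟩

end

variable {α : Type} [DecidableEq α]

theorem leaves_nonempty : ∀ t : BTree α, t.leaves.Nonempty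
  | .leaf a => ⟨a, Finset.mem_singleton_self a⟩
  | .node l _ => (leaves_nonempty l).mono Finset.subset_union_left

theorem Iso.leaves_eq : ∀ {s t : BTree α}, Iso s t → s.leaves = t.leaves
  | _, _, .leaf _ => rfl
  | _, _, .node h₁ h₂ => by simp only [leaves, h₁.leaves_eq, h₂.leaves_eq]
  | _, _, .swap h₁ h₂ => by simp only [leaves, h₁.leaves_eq, h₂.leaves_eq, Finset.union_comm]

theorem Iso.exists_subtree {t t' v : BTree α} (hiso : Iso t t') (hv : Subtree v t) :
    ∃ v', Subtree v' t' ∧ v'.leaves = v.leaves := by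
  induction hiso with
  | leaf a => cases hv; exact ⟨_, .refl _, rfl⟩
  | node h₁ h₂ ih₁ ih₂ =>
    cases hv with
    | refl => exact ⟨_, .refl _, (Iso.node h₁ h₂).leaves_eq.symm⟩
    | left hv => obtain ⟨v', hv', h⟩ := ih₁ hv; exact ⟨v', .left hv', h⟩
    | right hv => obtain ⟨v', hv', h⟩ := ih₂ hv; exact ⟨v', .right hv', h⟩
  | swap h₁ h₂ ih₁ ih₂ =>
    cases hv with
    | refl => exact ⟨_, .refl _, (Iso.swap h₁ h₂).leaves_eq.symm⟩
    | left hv => obtain ⟨v', hv', h⟩ := ih₁ hv; exact ⟨v', .right hv', h⟩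
    | right hv => obtain ⟨v', hv', h⟩ := ih₂ hv; exact ⟨v', .left hv', h⟩

namespace Subtree

variable {u v T : BTree α}

theorem leaves_subset (h : Subtree u T) : u.leaves ⊆ T.leaves := by
  induction h with
  | refl => exact subset_rfl
  | left _ ih => exact ih.trans Finset.subset_union_left
  | right _ ih => exact ih.trans Finset.subset_union_right

theorem nodupLeaves (h : Subtree u T) (hnd : T.nodupLeaves) : u.nodupLeaves := by
  induction h with
  | refl => exact hnd
  | left _ ih => exact ih hnd.1
  | right _ ih => exact ih hnd.2.1

end Subtree

theorem subtree_comparable {T u v : BTree α} (hnd : T.nodupLeaves) (hu : Subtree u T)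
    (hv : Subtree v T) : Subtree u v ∨ Subtree v u ∨ Disjoint u.leaves v.leaves := by
  induction T with
  | leaf a => cases hu; exact .inr (.inl hv)
  | node l r ihl ihr =>
    have hlr : Disjoint l.leaves r.leaves := hnd.2.2
    cases hu with
    | refl => exact .inr (.inl hv)
    | left hu =>
      cases hv with
      | refl => exact .inl (.left hu)
      | left hv => exact ihl hnd.1 hu hv
      | right hv => exact .inr (.inr ((hlr.mono_left hu.leaves_subset).mono_right hv.leaves_subset))
    | right hu =>
      cases hv with
      | refl => exact .inl (.right hu)
      | left hv =>
        exact .inr (.inr ((hlr.symm.mono_left hu.leaves_subset).mono_right hv.leaves_subset))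
      | right hv => exact ihr hnd.2.1 hu hv

theorem Subtree.of_leaves_ssubset {T u v : BTree α} (hnd : T.nodupLeaves) (hu : Subtree u T)
    (hv : Subtree v T) (h : u.leaves ⊂ v.leaves) : Subtree u v := by
  rcases subtree_comparable hnd hu hv with huv | hvu | hdisj
  · exact huv
  · exact absurd hvu.leaves_subset h.not_subset
  · obtain ⟨a, ha⟩ := leaves_nonempty u
    exact absurd (h.subset ha) (Finset.disjoint_left.mp hdisj ha)

theorem restrict_cases (t : BTree α) (L : Finset α) :
    (restrict t L = none ∧ Disjoint t.leaves L) ∨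
      ∃ t', restrict t L = some t' ∧ t'.leaves = t.leaves ∩ L := by
  induction t with
  | leaf a =>
    by_cases h : a ∈ L
    · exact .inr ⟨.leaf a, by simp [restrict, h], by simp [leaves, h]⟩
    · exact .inl ⟨by simp [restrict, h], by simp [leaves, h]⟩
  | node l r ihl ihr =>
    rcases ihl with ⟨hl, hdl⟩ | ⟨l', hl, hll⟩ <;> rcases ihr with ⟨hr, hdr⟩ | ⟨r', hr, hrr⟩
    · exact .inl ⟨by simp [restrict, hl, hr], Finset.disjoint_union_left.mpr ⟨hdl, hdr⟩⟩
    · exact .inr ⟨r', by simp [restrict, hl, hr], by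
        simp [leaves, hrr, Finset.union_inter_distrib_right, Finset.disjoint_iff_inter_eq_empty.mp hdl]⟩
    · exact .inr ⟨l', by simp [restrict, hl, hr], by
        simp [leaves, hll, Finset.union_inter_distrib_right, Finset.disjoint_iff_inter_eq_empty.mp hdr]⟩
    · exact .inr ⟨.node l' r', by simp [restrict, hl, hr], by
        simp [leaves, hll, hrr, Finset.union_inter_distrib_right]⟩

theorem restrict_eq_none_iff {t : BTree α} {L : Finset α} :
    restrict t L = none ↔ Disjoint t.leaves L := by
  rcases restrict_cases t L with ⟨h, hd⟩ | ⟨t', h, ht'⟩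
  · exact iff_of_true h hd
  · refine iff_of_false (by simp [h]) fun hd => ?_
    obtain ⟨a, ha⟩ := leaves_nonempty t'
    rw [ht', Finset.mem_inter] at ha
    exact Finset.disjoint_left.mp hd ha.1 ha.2

theorem restrict_of_leaves_subset {t : BTree α} {L : Finset α} (h : t.leaves ⊆ L) :
    restrict t L = some t := by
  induction t with
  | leaf a => simp_all [leaves, restrict]
  | node l r ihl ihr =>
    rw [leaves, Finset.union_subset_iff] at h
    simp [restrict, ihl h.1, ihr h.2]

theorem nodupLeaves_of_restrict_eq_some {t t' : BTree α} {L : Finset α} (hnd : t.nodupLeaves)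
    (h : restrict t L = some t') : t'.nodupLeaves := by
  induction t generalizing t' with
  | leaf a => simp only [restrict] at h; split_ifs at h; cases h; trivial
  | node l r ihl ihr =>
    simp only [restrict] at h
    rcases restrict_cases l L with ⟨hl, _⟩ | ⟨l', hl, hll⟩ <;>
      rcases restrict_cases r L with ⟨hr, _⟩ | ⟨r', hr, hrr⟩ <;>
      simp only [hl, hr, reduceCtorEq, Option.some_inj] at h <;> subst h
    · exact ihr hnd.2.1 hr
    · exact ihl hnd.1 hl
    · refine ⟨ihl hnd.1 hl, ihr hnd.2.1 hr, ?_⟩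
      rw [hll, hrr]
      exact (hnd.2.2.mono_left Finset.inter_subset_left).mono_right Finset.inter_subset_left

theorem Subtree.restrict_eq {T u : BTree α} {L : Finset α} (hnd : T.nodupLeaves)
    (hu : Subtree u T) (hL : L ⊆ u.leaves) : restrict T L = restrict u L := by
  induction hu with
  | refl => rfl
  | @left l r h ih =>
    have hr : restrict r L = none :=
      restrict_eq_none_iff.mpr (hnd.2.2.symm.mono_right (hL.trans h.leaves_subset))
    rw [← ih hnd.1]
    rcases restrict_cases l L with ⟨hl, _⟩ | ⟨l', hl, _⟩ <;> simp [restrict, hl, hr]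
  | @right l r h ih =>
    have hl : restrict l L = none :=
      restrict_eq_none_iff.mpr (hnd.2.2.mono_right (hL.trans h.leaves_subset))
    rw [← ih hnd.2.1]
    rcases restrict_cases r L with ⟨hr, _⟩ | ⟨r', hr, _⟩ <;> simp [restrict, hl, hr]

theorem Subtree.restrict {T v t v' : BTree α} {L : Finset α} (hv : Subtree v T)
    (ht : restrict T L = some t) (hv' : restrict v L = some v') : Subtree v' t := by
  induction hv generalizing t with
  | refl => exact (Option.some_inj.mp (ht.symm.trans hv')) ▸ .refl _
  | @left l r h ih =>
    obtain ⟨l', hl, _⟩ := (restrict_cases l L).resolve_left fun ⟨_, hd⟩ =>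
      absurd (restrict_eq_none_iff.mpr (hd.mono_left h.leaves_subset)) (by simp [hv'])
    simp only [BTree.restrict, hl] at ht
    rcases restrict_cases r L with ⟨hr, _⟩ | ⟨r', hr, _⟩ <;>
      simp only [hr, Option.some_inj] at ht <;> subst ht
    · exact ih hl
    · exact .left (ih hl)
  | @right l r h ih =>
    obtain ⟨r', hr, _⟩ := (restrict_cases r L).resolve_left fun ⟨_, hd⟩ =>
      absurd (restrict_eq_none_iff.mpr (hd.mono_left h.leaves_subset)) (by simp [hv'])
    simp only [BTree.restrict, hr] at ht
    rcases restrict_cases l L with ⟨hl, _⟩ | ⟨l', hl, _⟩ <;>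
      simp only [hl, Option.some_inj] at ht <;> subst ht
    · exact ih hr
    · exact .right (ih hr)

theorem exists_restrict_eq_some {t : BTree α} {L : Finset α} {a : α} (ht : a ∈ t.leaves)
    (hL : a ∈ L) : ∃ t', restrict t L = some t' ∧ t'.leaves = t.leaves ∩ L :=
  (restrict_cases t L).resolve_left fun ⟨_, hd⟩ => Finset.disjoint_left.mp hd ht hL

/-- Clusters survive restriction to `{a, b, c}` and isomorphism, so the cluster of `T₁`
containing `a, b` but not `c` and the cluster of `T₂` containing `a, c` but not `b` would be
two overlapping, non-nested clusters of the same tree. -/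
theorem not_sameTriplet {T₁ T₂ v₁ v₂ : BTree α} {a b c : α} (hnd : T₂.nodupLeaves)
    (hv₁ : Subtree v₁ T₁) (ha₁ : a ∈ v₁.leaves) (hb₁ : b ∈ v₁.leaves) (hc₁ : c ∉ v₁.leaves)
    (hv₂ : Subtree v₂ T₂) (ha₂ : a ∈ v₂.leaves) (hb₂ : b ∉ v₂.leaves) (hc₂ : c ∈ v₂.leaves) :
    ¬ sameTriplet T₁ T₂ a b c := by
  rintro ⟨t₁, t₂, ht₁, ht₂, hiso⟩
  have ha : a ∈ ({a, b, c} : Finset α) := by simp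
  obtain ⟨u₁, hu₁, hu₁L⟩ := exists_restrict_eq_some ha₁ ha
  obtain ⟨u₂, hu₂, hu₂L⟩ := exists_restrict_eq_some ha₂ ha
  obtain ⟨u₁', hu₁', hu₁'L⟩ := hiso.exists_subtree (hv₁.restrict ht₁ hu₁)
  have hu₂t₂ := hv₂.restrict ht₂ hu₂
  rcases subtree_comparable (nodupLeaves_of_restrict_eq_some hnd ht₂) hu₁' hu₂t₂ with h | h | h
  · have hb : b ∈ u₁'.leaves := by simp [hu₁'L, hu₁L, hb₁]
    exact hb₂ (by simpa [hu₂L] using h.leaves_subset hb)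
  · have hc : c ∈ u₂.leaves := by simp [hu₂L, hc₂]
    exact hc₁ (by simpa [hu₁'L, hu₁L] using h.leaves_subset hc)
  · have ha₁' : a ∈ u₁'.leaves := by simp [hu₁'L, hu₁L, ha₁]
    exact Finset.disjoint_left.mp h ha₁' (by simp [hu₂L, ha₂])

theorem exists_graft_of_restrict {y v : BTree α} {A : Finset α} (hnd : y.nodupLeaves)
    (hv : Subtree v y) (hne : v ≠ y) (hA : Disjoint A v.leaves)
    (hcov : y.leaves ⊆ A ∪ v.leaves) : ∃ t, restrict y A = some t ∧ Graft v t y := by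
  induction hv with
  | refl => exact absurd rfl hne
  | @left l r h ih =>
    have hr : restrict r A = some r := restrict_of_leaves_subset fun e he =>
      (Finset.mem_union.mp (hcov (Finset.mem_union_right _ he))).resolve_right
        fun hev => Finset.disjoint_left.mp hnd.2.2 (h.leaves_subset hev) he
    by_cases hvl : v = l
    · subst hvl
      exact ⟨r, by simp [restrict, restrict_eq_none_iff.mpr hA.symm, hr], .atRootL r⟩
    · obtain ⟨t, ht, hg⟩ := ih hnd.1 hvl fun e he => hcov (Finset.mem_union_left _ he)
      exact ⟨node t r, by simp [restrict, ht, hr], .left hg⟩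
  | @right l r h ih =>
    have hl : restrict l A = some l := restrict_of_leaves_subset fun e he =>
      (Finset.mem_union.mp (hcov (Finset.mem_union_left _ he))).resolve_right
        fun hev => Finset.disjoint_left.mp hnd.2.2 he (h.leaves_subset hev)
    by_cases hvr : v = r
    · subst hvr
      exact ⟨l, by simp [restrict, restrict_eq_none_iff.mpr hA.symm, hl], .atRootR l⟩
    · obtain ⟨t, ht, hg⟩ := ih hnd.2.1 hvr fun e he => hcov (Finset.mem_union_right _ he)
      exact ⟨node l t, by simp [restrict, ht, hl], .right hg⟩

theorem exists_subtree_leaves_eq {T : BTree α} {L : Finset α} (hne : L.Nonempty)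
    (hL : L ⊆ T.leaves)
    (habs : ∀ v, Subtree v T → ∀ a ∈ L, a ∈ v.leaves → ∀ c ∈ v.leaves, c ∉ L → L ⊆ v.leaves) :
    ∃ v, Subtree v T ∧ v.leaves = L := by
  induction T with
  | leaf a => exact ⟨leaf a, .refl _, ((hne.subset_singleton_iff).mp hL).symm⟩
  | node l r ihl ihr =>
    by_cases hl : L ⊆ l.leaves
    · obtain ⟨v, hv, h⟩ := ihl hl fun v hv => habs v (.left hv)
      exact ⟨v, .left hv, h⟩
    by_cases hr : L ⊆ r.leaves
    · obtain ⟨v, hv, h⟩ := ihr hr fun v hv => habs v (.right hv)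
      exact ⟨v, .right hv, h⟩
    obtain ⟨a, haL, har⟩ := Finset.not_subset.mp hr
    obtain ⟨b, hbL, hbl⟩ := Finset.not_subset.mp hl
    have hal : a ∈ l.leaves := (Finset.mem_union.mp (hL haL)).resolve_right har
    have hbr : b ∈ r.leaves := (Finset.mem_union.mp (hL hbL)).resolve_left hbl
    refine ⟨node l r, .refl _, Finset.Subset.antisymm (fun c hc => ?_) hL⟩
    by_contra hcL
    rcases Finset.mem_union.mp hc with hcl | hcr
    · exact hl (habs l (.left (.refl l)) a haL hal c hcl hcL)
    · exact hr (habs r (.right (.refl r)) b hbL hbr c hcr hcL)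

theorem mem_unionLeaves {Gs : List (BTree α)} {a : α} :
    a ∈ unionLeaves Gs ↔ ∃ G ∈ Gs, a ∈ G.leaves := by
  induction Gs with
  | nil => simp [unionLeaves]
  | cons G Gs ih => simp only [unionLeaves, List.foldr] at ih ⊢; simp [ih]

theorem atLeastTwo.exists_ne {Gs : List (BTree α)} {w : BTree α} (h2 : atLeastTwo Gs w)
    (G : BTree α) : ∃ H ∈ Gs, H ≠ G ∧ Subtree H w := by
  obtain ⟨G₁, hG₁, G₂, hG₂, h₁₂, h₁, h₂⟩ := h2
  by_cases h₁G : G₁ = G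
  · exact ⟨G₂, hG₂, fun h => h₁₂ (h₁G.trans h.symm), h₂⟩
  · exact ⟨G₁, hG₁, h₁G, h₁⟩

structure TripletRespectingSetting (GInit GTR : BTree α) (Gs : List (BTree α)) : Prop where
  nodup_init : GInit.nodupLeaves
  nodup_tr : GTR.nodupLeaves
  subtree_init : ∀ G ∈ Gs, Subtree G GInit
  pairwise_disjoint : Gs.Pairwise fun a b => Disjoint a.leaves b.leaves
  unionLeaves_eq : unionLeaves Gs = GInit.leaves
  leaves_eq : GTR.leaves = GInit.leaves
  tripletRespecting : tripletRespecting GInit GTR Gs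

namespace TripletRespectingSetting

variable {GInit GTR w : BTree α} {Gs : List (BTree α)} (hS : TripletRespectingSetting GInit GTR Gs)
include hS

theorem disjoint {G H : BTree α} (hG : G ∈ Gs) (hH : H ∈ Gs) (hne : G ≠ H) :
    Disjoint G.leaves H.leaves :=
  have : Std.Symm fun a b : BTree α => Disjoint a.leaves b.leaves := ⟨fun _ _ h => h.symm⟩
  hS.pairwise_disjoint.forall hG hH hne

theorem exists_mem_of_mem_leaves {a : α} (ha : a ∈ GInit.leaves) : ∃ G ∈ Gs, a ∈ G.leaves :=
  mem_unionLeaves.mp (hS.unionLeaves_eq ▸ ha)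

theorem leaves_subset_of_atLeastTwo (hw : Subtree w GInit) (h2 : atLeastTwo Gs w) {G : BTree α}
    (hG : G ∈ Gs) {a : α} (haG : a ∈ G.leaves) (haw : a ∈ w.leaves) : G.leaves ⊆ w.leaves := by
  rcases subtree_comparable hS.nodup_init (hS.subtree_init G hG) hw with h | hwG | h
  · exact h.leaves_subset
  · obtain ⟨H, hH, hHG, hHw⟩ := h2.exists_ne G
    obtain ⟨e, he⟩ := leaves_nonempty H
    exact absurd ((hHw.trans hwG).leaves_subset he)
      (Finset.disjoint_left.mp (hS.disjoint hH hG hHG) he)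
  · exact absurd haw (Finset.disjoint_left.mp h haG)

theorem leaves_subset_of_mem_of_not_mem (hw : Subtree w GInit) (h2 : atLeastTwo Gs w)
    {v : BTree α} (hv : Subtree v GTR) {a c : α} (hav : a ∈ v.leaves) (haw : a ∈ w.leaves)
    (hcv : c ∈ v.leaves) (hcw : c ∉ w.leaves) : w.leaves ⊆ v.leaves := by
  intro b hbw
  by_contra hbv
  have tree_of : ∀ {e}, e ∈ w.leaves → ∃ G ∈ Gs, e ∈ G.leaves := fun he =>
    hS.exists_mem_of_mem_leaves (hw.leaves_subset he)
  obtain ⟨Gc, hGc, hc⟩ := hS.exists_mem_of_mem_leaves (hS.leaves_eq ▸ hv.leaves_subset hcv)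
  have hne_c : ∀ {G e}, G ∈ Gs → e ∈ G.leaves → e ∈ w.leaves → G ≠ Gc := by
    rintro G e hG he hew rfl
    exact hcw (hS.leaves_subset_of_atLeastTwo hw h2 hG he hew hc)
  have conflict : ∀ {p q Gp Gq}, Gp ∈ Gs → Gq ∈ Gs → Gp ≠ Gq → p ∈ Gp.leaves → q ∈ Gq.leaves →
      p ∈ w.leaves → q ∈ w.leaves → p ∈ v.leaves → q ∉ v.leaves → False :=
    fun hGp hGq hpq hp hq hpw hqw hpv hqv =>
      not_sameTriplet hS.nodup_tr hw hpw hqw hcw hv hpv hqv hcv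
        (hS.tripletRespecting _ hGp _ hGq _ hGc hpq (hne_c hGp hp hpw) (hne_c hGq hq hqw)
          _ hp _ hq _ hc)
  obtain ⟨Ga, hGa, ha⟩ := tree_of haw
  obtain ⟨Gb, hGb, hb⟩ := tree_of hbw
  by_cases hab : Ga = Gb
  · subst hab
    obtain ⟨H, hH, hHa, hHw⟩ := h2.exists_ne Ga
    obtain ⟨d, hd⟩ := leaves_nonempty H
    have hdw := hHw.leaves_subset hd
    by_cases hdv : d ∈ v.leaves
    · exact conflict hH hGa hHa hd hb hdw hbw hdv hbv
    · exact conflict hGa hH (Ne.symm hHa) ha hd haw hdw hav hdv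
  · exact conflict hGa hGb hab ha hb haw hbw hav hbv

theorem exists_subtree_leaves_eq (hw : Subtree w GInit) (h2 : atLeastTwo Gs w) :
    ∃ y, Subtree y GTR ∧ y.leaves = w.leaves :=
  BTree.exists_subtree_leaves_eq (leaves_nonempty w) (hS.leaves_eq ▸ hw.leaves_subset)
    fun _ hv _ haw hav _ hcv hcw => hS.leaves_subset_of_mem_of_not_mem hw h2 hv hav haw hcv hcw

end TripletRespectingSetting

end BTree

/-- if the left child subtree of `x` is itself a tree of `𝒢`
and the right child subtree contains at least two trees of `𝒢`, then in any
triplet-respecting supertree the subtree `G^{TR}[y]` (with `L(y) = L(x)`) is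
obtained by grafting `G^{TR}[y*]` (with `L(y*) = L(x_r)`) onto
`G^{Init}[x_l]` at some node `x*`. -/
theorem stmt8 {α : Type} [DecidableEq α] (GInit GTR : BTree α) (Gs : List (BTree α))
    (hndI : GInit.nodupLeaves) (hndT : GTR.nodupLeaves)
    (hsub : ∀ Gi ∈ Gs, BTree.Subtree Gi GInit)
    (hdisj : Gs.Pairwise fun a b => Disjoint a.leaves b.leaves)
    (hcover : BTree.unionLeaves Gs = GInit.leaves)
    (hleaves : GTR.leaves = GInit.leaves)
    (hdisp : ∀ Gi ∈ Gs, GTR.displays Gi)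
    (htrip : BTree.tripletRespecting GInit GTR Gs)
    (xl xr : BTree α) (hx : BTree.Subtree (BTree.node xl xr) GInit)
    (hxl : xl ∈ Gs)
    (h2r : BTree.atLeastTwo Gs xr) :
    ∃ y ystar g, BTree.Subtree y GTR ∧ y.leaves = (BTree.node xl xr).leaves ∧
      BTree.Subtree ystar GTR ∧ ystar.leaves = xr.leaves ∧
      BTree.Graft ystar xl g ∧ BTree.Iso g y := by
  open BTree in
  have hS : TripletRespectingSetting GInit GTR Gs :=
    ⟨hndI, hndT, hsub, hdisj, hcover, hleaves, htrip⟩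
  have hlr : Disjoint xl.leaves xr.leaves := (hx.nodupLeaves hndI).2.2
  have h2x : atLeastTwo Gs (node xl xr) := by
    obtain ⟨G, hG, -, -, -, hGxr, -⟩ := h2r
    refine ⟨xl, hxl, G, hG, ?_, .left (.refl xl), .right hGxr⟩
    rintro rfl
    obtain ⟨e, he⟩ := leaves_nonempty xl
    exact Finset.disjoint_left.mp hlr he (hGxr.leaves_subset he)
  obtain ⟨y, hyT, hyL⟩ := hS.exists_subtree_leaves_eq hx h2x
  obtain ⟨ystar, hysT, hysL⟩ := hS.exists_subtree_leaves_eq (.trans (.right (.refl xr)) hx) h2r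
  have hxr_ssub : xr.leaves ⊂ (node xl xr).leaves := by
    obtain ⟨e, he⟩ := leaves_nonempty xl
    exact Finset.ssubset_iff_subset_ne.mpr ⟨Finset.subset_union_right, fun h =>
      Finset.disjoint_left.mp hlr he (h ▸ Finset.mem_union_left _ he)⟩
  have hysy : Subtree ystar y := hysT.of_leaves_ssubset hndT hyT (hyL ▸ hysL ▸ hxr_ssub)
  obtain ⟨t, ht, hgraft⟩ := exists_graft_of_restrict (hyT.nodupLeaves hndT) hysy
    (fun h => hxr_ssub.ne (hysL ▸ hyL ▸ congrArg leaves h)) (hysL ▸ hlr) (hyL ▸ hysL ▸ subset_rfl)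
  obtain ⟨t', ht', hiso⟩ := hdisp xl hxl
  rw [hyT.restrict_eq hndT (hyL ▸ Finset.subset_union_left), ht, Option.some_inj] at ht'
  obtain ⟨g, hg, hgiso⟩ := hgraft.exists_of_iso (ht' ▸ hiso)
  exact ⟨y, ystar, g, hyT, hyL, hysT, hysL, hg, hgiso⟩
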